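/- A function g : ℝᵈ → ℝ ∪ {+∞} is convex if and only if it is the pointwise supremum of a family of affine extended functions. -/

import Mathlib

/-- A *linear extended function*: scaling and additivity whenever the sum is legal. -/
def IsLinExt {E : Type*} [AddCommGroup E] [Module ℝ E] (f : E → EReal) : Prop :=
  (∀ (α : ℝ) (x : E), f (α • x) = (α : EReal) * f x) ∧
  (∀ x x' : E, ¬ ((f x = ⊤ ∧ f x' = ⊥) ∨ (f x = ⊥ ∧ f x' = ⊤)) →
    f (x + x') = f x + f x')

/-- An *affine extended function*: a horizontally and vertically shifted linear extended fn. -/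
def IsAffExt {E : Type*} [AddCommGroup E] [Module ℝ E] (h : E → EReal) : Prop :=
  ∃ (f : E → EReal) (x₀ : E) (β : ℝ), IsLinExt f ∧ ∀ x, h x = f (x - x₀) + (β : EReal)

/-!
Epigraphs of affine extended functions are convex, and the epigraph of a supremum is the
intersection of the epigraphs. Conversely, let the epigraph `C` of `g` be convex and let `q` lie
strictly below the graph; after translating `q` to the origin, a hyperplane through `0`
supporting `C` is either the graph of a linear functional, which is the required minorant, or
vertical, `{ψ = 0}` with `ψ ≥ 0` on `C`. In the vertical case we recurse on the slice of `C` over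
`ker ψ`, of lower dimension, and extend the result by `+∞` on `{ψ < 0}` and `-∞` on `{ψ > 0}`.
-/

universe u

open Module Set

/-- `t • (-∞) + e` read lexicographically: the infinite term wins unless `t = 0`. -/
noncomputable def lexPatch (t : ℝ) (e : EReal) : EReal :=
  if t < 0 then ⊤ else if 0 < t then ⊥ else e

lemma lexPatch_mul (α t : ℝ) (e : EReal) :
    lexPatch (α * t) (α * e) = α * lexPatch t e := by
  unfold lexPatch
  rcases lt_trichotomy α 0 with hα | rfl | hα <;> rcases lt_trichotomy t 0 with ht | rfl | ht
  all_goals simp [*, mul_neg_of_neg_of_pos, mul_pos_of_neg_of_neg, mul_neg_of_pos_of_neg,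
    EReal.coe_mul_top_of_neg, EReal.coe_mul_bot_of_neg, EReal.coe_mul_top_of_pos,
    EReal.coe_mul_bot_of_pos, not_lt_of_gt]

lemma lexPatch_add {t t' : ℝ} {e e' e'' : EReal}
    (hlegal : ¬ ((lexPatch t e = ⊤ ∧ lexPatch t' e' = ⊥) ∨
      (lexPatch t e = ⊥ ∧ lexPatch t' e' = ⊤)))
    (hzero : t = 0 → t' = 0 → e'' = e + e') :
    lexPatch (t + t') e'' = lexPatch t e + lexPatch t' e' := by
  unfold lexPatch at *
  rcases lt_trichotomy t 0 with ht | rfl | ht <;> rcases lt_trichotomy t' 0 with ht' | rfl | ht'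
  all_goals simp_all [not_lt_of_gt, add_neg, add_pos, EReal.top_add_of_ne_bot,
    EReal.add_top_of_ne_bot]

section LinExt

variable {E F : Type*} [AddCommGroup E] [Module ℝ E] [AddCommGroup F] [Module ℝ F]

lemma IsLinExt.map_zero {f : E → EReal} (hf : IsLinExt f) : f 0 = 0 := by
  simpa using hf.1 0 0

lemma isLinExt_coe_linearMap (ψ : E →ₗ[ℝ] ℝ) : IsLinExt fun x => (ψ x : EReal) :=
  ⟨fun α x => by simp [EReal.coe_mul], fun x x' _ => by simp [EReal.coe_add]⟩

lemma IsLinExt.comp_linearMap {f : E → EReal} (hf : IsLinExt f) (L : F →ₗ[ℝ] E) :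
    IsLinExt (f ∘ L) :=
  ⟨fun α x => by simp [hf.1], fun x x' h => by simpa using hf.2 _ _ h⟩

lemma IsLinExt.lexPatch {G : E → EReal} (hG : IsLinExt G) (ψ : E →ₗ[ℝ] ℝ) :
    IsLinExt fun x => lexPatch (ψ x) (G x) := by
  refine ⟨fun α x => by simp only [map_smul, smul_eq_mul, hG.1, lexPatch_mul],
    fun x x' hlegal => ?_⟩
  show _root_.lexPatch (ψ (x + x')) (G (x + x')) = _
  rw [map_add]
  exact lexPatch_add hlegal fun h h' =>
    hG.2 x x' (by simpa [_root_.lexPatch, h, h'] using hlegal)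

lemma IsLinExt.convex_epigraph {f : E → EReal} (hf : IsLinExt f) :
    Convex ℝ {p : E × ℝ | f p.1 ≤ p.2} := by
  rintro ⟨u, s⟩ (hu : f u ≤ s) ⟨v, t⟩ (hv : f v ≤ t) a b ha hb -
  have hau : f (a • u) ≤ (a * s : ℝ) := by
    rw [hf.1, EReal.coe_mul]; exact mul_le_mul_of_nonneg_left hu (by exact_mod_cast ha)
  have hbv : f (b • v) ≤ (b * t : ℝ) := by
    rw [hf.1, EReal.coe_mul]; exact mul_le_mul_of_nonneg_left hv (by exact_mod_cast hb)
  have hlegal : ¬ ((f (a • u) = ⊤ ∧ f (b • v) = ⊥) ∨ (f (a • u) = ⊥ ∧ f (b • v) = ⊤)) := by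
    rintro (⟨h, -⟩ | ⟨-, h⟩)
    · exact EReal.coe_ne_top _ (top_le_iff.1 (h ▸ hau))
    · exact EReal.coe_ne_top _ (top_le_iff.1 (h ▸ hbv))
  show f (a • u + b • v) ≤ ((a * s + b * t : ℝ) : EReal)
  rw [hf.2 _ _ hlegal, EReal.coe_add]
  exact add_le_add hau hbv

lemma IsAffExt.convex_epigraph {h : E → EReal} (hh : IsAffExt h) :
    Convex ℝ {p : E × ℝ | h p.1 ≤ p.2} := by
  obtain ⟨f, x₀, β, hf, hfh⟩ := hh
  have hepi : {p : E × ℝ | h p.1 ≤ p.2} = (· + -(x₀, β)) ⁻¹' {p | f p.1 ≤ p.2} := by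
    ext ⟨x, t⟩
    show h x ≤ t ↔ f (x + -x₀) ≤ ((t + -β : ℝ) : EReal)
    rw [← sub_eq_add_neg, ← sub_eq_add_neg, hfh, EReal.coe_sub,
      EReal.le_sub_iff_add_le (.inl (EReal.coe_ne_bot β)) (.inl (EReal.coe_ne_top β))]
  rw [hepi]
  exact hf.convex_epigraph.translate_preimage_left _

theorem IsAffExt.convex_epigraph_iSup {ι : Type*} {H : ι → E → EReal} (hH : ∀ i, IsAffExt (H i)) :
    Convex ℝ {p : E × ℝ | ⨆ i, H i p.1 ≤ p.2} := by
  simp only [iSup_le_iff, ofPred_forall]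
  exact convex_iInter fun i => (hH i).convex_epigraph

theorem exists_isLinExt_le_of_ker {C : Set (E × ℝ)} (ψ : E →ₗ[ℝ] ℝ) (hψ : ∀ p ∈ C, 0 ≤ ψ p.1)
    {G : LinearMap.ker ψ → EReal} (hG : IsLinExt G)
    (hGC : ∀ p ∈ C, ∀ hp : p.1 ∈ LinearMap.ker ψ, G ⟨p.1, hp⟩ ≤ p.2) :
    ∃ f : E → EReal, IsLinExt f ∧ ∀ p ∈ C, f p.1 ≤ p.2 := by
  obtain ⟨Q, hQ⟩ := (LinearMap.ker ψ).exists_isCompl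
  let π := (LinearMap.ker ψ).projectionOnto Q hQ
  refine ⟨fun x => lexPatch (ψ x) (G (π x)), (hG.comp_linearMap π).lexPatch ψ, fun p hp => ?_⟩
  rcases (hψ p hp).eq_or_lt with h | h
  · have hp1 : p.1 ∈ LinearMap.ker ψ := h.symm
    have hπ : π p.1 = ⟨p.1, hp1⟩ := Submodule.projectionOnto_apply_left hQ ⟨p.1, hp1⟩
    simpa [lexPatch, ← h, hπ] using hGC p hp hp1
  · simp [lexPatch, h, not_lt_of_gt h]

end LinExt

section FiniteDimensional

variable {E : Type u} [NormedAddCommGroup E] [NormedSpace ℝ E] [FiniteDimensional ℝ E]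

theorem exists_nonneg_on_of_zero_notMem {C : Set E} (hC : Convex ℝ C) (hne : C.Nonempty)
    (h0 : (0 : E) ∉ C) : ∃ φ : E →ₗ[ℝ] ℝ, φ ≠ 0 ∧ ∀ p ∈ C, 0 ≤ φ p := by
  by_cases hint : (interior C).Nonempty
  · obtain ⟨f, hf, hfC⟩ := geometric_hahn_banach_of_nonempty_interior_point hC
      (fun h => h0 (interior_subset h)) hint
    refine ⟨-f.toLinearMap, fun h => hf ?_, fun p hp => by simpa using hfC p hp⟩
    ext x
    simpa using congr($h x)
  -- Otherwise `C` lies in a proper affine subspace, on which a nonzero functional is constant.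
  obtain ⟨p₀, hp₀⟩ := hne
  have hW : (affineSpan ℝ C).direction < ⊤ := by
    rwa [lt_top_iff_ne_top, Ne, AffineSubspace.direction_eq_top_iff_of_nonempty
      ((affineSpan_nonempty ℝ).2 ⟨p₀, hp₀⟩), ← hC.interior_nonempty_iff_affineSpan_eq_top]
  obtain ⟨φ, hφ, hφW⟩ := (affineSpan ℝ C).direction.exists_le_ker_of_lt_top hW
  have hconst : ∀ p ∈ C, φ p = φ p₀ := fun p hp => by
    simpa [sub_eq_zero] using hφW (AffineSubspace.vsub_mem_direction
      (subset_affineSpan ℝ C hp) (subset_affineSpan ℝ C hp₀))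
  rcases le_total 0 (φ p₀) with h | h
  · exact ⟨φ, hφ, fun p hp => hconst p hp ▸ h⟩
  · exact ⟨-φ, neg_ne_zero.2 hφ, fun p hp => by simpa [hconst p hp] using h⟩

theorem exists_linearMap_le_or_exists_nonneg {C : Set (E × ℝ)} (hC : Convex ℝ C)
    (hne : C.Nonempty) (hup : ∀ p ∈ C, ∀ s : ℝ, 0 ≤ s → (p.1, p.2 + s) ∈ C)
    (h0 : (0 : E × ℝ) ∉ C) :
    (∃ ψ : E →ₗ[ℝ] ℝ, ∀ p ∈ C, ψ p.1 ≤ p.2) ∨ ∃ ψ : E →ₗ[ℝ] ℝ, ψ ≠ 0 ∧ ∀ p ∈ C, 0 ≤ ψ p.1 := by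
  obtain ⟨φ, hφ, hφC⟩ := exists_nonneg_on_of_zero_notMem hC hne h0
  set ψ := φ ∘ₗ LinearMap.inl ℝ E ℝ
  set c := φ (0, 1)
  have hdec : ∀ p : E × ℝ, φ p = ψ p.1 + p.2 * c := fun p => by
    calc φ p = φ ((p.1, 0) + p.2 • (0, 1)) := by congr 1; ext <;> simp
      _ = ψ p.1 + p.2 * c := by rw [map_add, map_smul, smul_eq_mul]; rfl
  obtain ⟨p₀, hp₀⟩ := hne
  have hc : 0 ≤ c := by
    by_contra! hc
    have hs : 0 ≤ (φ p₀ + 1) / -c := div_nonneg (by linarith [hφC p₀ hp₀]) (by linarith)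
    have hshift : φ (p₀.1, p₀.2 + (φ p₀ + 1) / -c) = φ p₀ + (φ p₀ + 1) / -c * c := by
      rw [hdec, hdec p₀]; ring
    have hcancel : (φ p₀ + 1) / -c * c = -(φ p₀ + 1) := by field_simp [hc.ne]
    linarith [hφC _ (hup p₀ hp₀ _ hs)]
  rcases hc.eq_or_lt with hc0 | hcpos
  · refine .inr ⟨ψ, fun hψ => hφ ?_, fun p hp => by simpa [hdec, ← hc0] using hφC p hp⟩
    exact LinearMap.ext fun p => by simp [hdec, hψ, ← hc0]
  · refine .inl ⟨-c⁻¹ • ψ, fun p hp => ?_⟩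
    have := hdec p ▸ hφC p hp
    rw [LinearMap.smul_apply, smul_eq_mul, neg_mul, neg_le, ← div_eq_inv_mul, le_div_iff₀ hcpos]
    linarith

theorem exists_isLinExt_le_of_convex {C : Set (E × ℝ)} (hC : Convex ℝ C)
    (hup : ∀ p ∈ C, ∀ s : ℝ, 0 ≤ s → (p.1, p.2 + s) ∈ C) (h0 : (0 : E × ℝ) ∉ C) :
    ∃ f : E → EReal, IsLinExt f ∧ ∀ p ∈ C, f p.1 ≤ p.2 := by
  induction hn : finrank ℝ E using Nat.strong_induction_on generalizing E with
  | _ n ih =>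
  rcases C.eq_empty_or_nonempty with rfl | hne
  · exact ⟨_, isLinExt_coe_linearMap 0, by simp⟩
  rcases exists_linearMap_le_or_exists_nonneg hC hne hup h0 with ⟨ψ, hψ⟩ | ⟨ψ, hψ0, hψ⟩
  · exact ⟨_, isLinExt_coe_linearMap ψ, fun p hp => EReal.coe_le_coe_iff.2 (hψ p hp)⟩
  let M : LinearMap.ker ψ × ℝ →ₗ[ℝ] E × ℝ := (LinearMap.ker ψ).subtype.prodMap LinearMap.id
  have hdim : finrank ℝ (LinearMap.ker ψ) < n :=
    hn ▸ Submodule.finrank_lt (by rwa [Ne, LinearMap.ker_eq_top])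
  obtain ⟨G, hG, hGC⟩ := ih _ hdim (hC.linear_preimage M) (fun q hq s hs => hup _ hq s hs)
    (by rwa [mem_preimage, map_zero]) rfl
  exact exists_isLinExt_le_of_ker ψ hψ hG fun p hp hp1 => hGC (⟨p.1, hp1⟩, p.2) hp

theorem exists_isAffExt_le_of_notMem {C : Set (E × ℝ)} (hC : Convex ℝ C)
    (hup : ∀ p ∈ C, ∀ s : ℝ, 0 ≤ s → (p.1, p.2 + s) ∈ C) {q : E × ℝ} (hq : q ∉ C) :
    ∃ h : E → EReal, IsAffExt h ∧ h q.1 = q.2 ∧ ∀ p ∈ C, h p.1 ≤ p.2 := by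
  obtain ⟨f, hf, hfC⟩ := exists_isLinExt_le_of_convex (hC.translate_preimage_left q)
    (fun p hp s hs => by
      show (p.1 + q.1, p.2 + s + q.2) ∈ C
      simpa [add_right_comm] using hup _ hp s hs) (by simpa using hq)
  refine ⟨fun x => f (x - q.1) + q.2, ⟨f, q.1, q.2, hf, fun _ => rfl⟩, by simp [hf.map_zero],
    fun p hp => ?_⟩
  rw [← EReal.le_sub_iff_add_le (.inl (EReal.coe_ne_bot _)) (.inl (EReal.coe_ne_top _)),
    ← EReal.coe_sub]
  exact hfC (p - q) (by simpa using hp)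

theorem exists_isAffExt_eq_iSup_of_convex {g : E → EReal}
    (hg : Convex ℝ {p : E × ℝ | g p.1 ≤ p.2}) :
    ∃ (ι : Type u) (H : ι → E → EReal), (∀ i, IsAffExt (H i)) ∧ ∀ x, g x = ⨆ i, H i x := by
  have hup (p : E × ℝ) (hp : g p.1 ≤ p.2) (s : ℝ) (hs : 0 ≤ s) : g p.1 ≤ ((p.2 + s : ℝ) : EReal) :=
    hp.trans (EReal.coe_le_coe_iff.2 (le_add_of_nonneg_right hs))
  choose H hH hHq hHg using fun q : {q : E × ℝ // ¬ g q.1 ≤ q.2} =>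
    exists_isAffExt_le_of_notMem hg hup q.2
  refine ⟨_, H, hH, fun x => le_antisymm ?_ (iSup_le fun q => ?_)⟩
  · exact EReal.ge_of_forall_gt_iff_ge.1 fun r hr =>
      (hHq ⟨(x, r), not_le.2 hr⟩).symm.le.trans (le_iSup (H · x) _)
  · exact EReal.le_of_forall_lt_iff_le.1 fun t ht => hHg q (x, t) ht.le

end FiniteDimensional

theorem stmt_13_general (d : ℕ) (g : (Fin d → ℝ) → EReal) :
    Convex ℝ {p : (Fin d → ℝ) × ℝ | g p.1 ≤ (p.2 : EReal)} ↔
      ∃ (ι : Type) (H : ι → (Fin d → ℝ) → EReal),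
        (∀ i, IsAffExt (H i)) ∧ ∀ x, g x = ⨆ i, H i x := by
  refine ⟨exists_isAffExt_eq_iSup_of_convex, fun ⟨ι, H, hH, hg⟩ => ?_⟩
  simpa only [hg] using IsAffExt.convex_epigraph_iSup hH

theorem stmt_13 (d : ℕ) (g : (Fin d → ℝ) → EReal) (hbot : ∀ x, g x ≠ ⊥) :
    Convex ℝ {p : (Fin d → ℝ) × ℝ | g p.1 ≤ (p.2 : EReal)} ↔
      ∃ (ι : Type) (H : ι → (Fin d → ℝ) → EReal),
        (∀ i, IsAffExt (H i)) ∧ ∀ x, g x = ⨆ i, H i x :=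
  stmt_13_general d g
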